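/- arXiv:1309.4070 — 5 statements merged into one kernel-verified Lean document; each statement's English description precedes it below -/
import Mathlib

section
/- Let C be a linear strict symmetric monoidal category with involutive braiding B, and let r be an infinitesimal braiding, i.e., a natural family of endomorphisms r_{x,y} : x ⊗ y → x ⊗ y satisfying B_{x,y} ∘ r_{y,x} = r_{x,y} ∘ B_{x,y} and r_{x, y⊗z} = r^{12}_{x,y} + r^{13}_{x,z}. Then the 4-term relation holds: [r^{12}_{x,y} + r^{13}_{x,z}, r^{23}_{y,z}] = 0 as endomorphisms of x ⊗ y ⊗ z, for all objects x, y, z. -/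
open CategoryTheory CategoryTheory.MonoidalCategory

namespace Stmt0

variable {k : Type*} [Field k] {C : Type*} [Category C] [MonoidalCategory C]
  [SymmetricCategory C] [Preadditive C] [CategoryTheory.Linear k C]

/-- `g¹² = g ⊗ id_z` as an endomorphism of `x ⊗ y ⊗ z`. -/
def conj12 {x y z : C} (g : x ⊗ y ⟶ x ⊗ y) : x ⊗ y ⊗ z ⟶ x ⊗ y ⊗ z :=
  (α_ x y z).inv ≫ (g ▷ z) ≫ (α_ x y z).hom

/-- `f¹³ = (id_x ⊗ B_{y,z}) (f ⊗ id_y) (id_x ⊗ B_{z,y})` as an endomorphism of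
`x ⊗ y ⊗ z` (for `f : x ⊗ z ⟶ x ⊗ z`). -/
def conj13 {x z : C} (y : C) (f : x ⊗ z ⟶ x ⊗ z) : x ⊗ y ⊗ z ⟶ x ⊗ y ⊗ z :=
  (x ◁ (β_ y z).hom) ≫ (α_ x z y).inv ≫ (f ▷ y) ≫ (α_ x z y).hom ≫
    (x ◁ (β_ z y).hom)

/-- `h²³ = id_x ⊗ h` as an endomorphism of `x ⊗ y ⊗ z`. -/
def conj23 (x : C) {y z : C} (h : y ⊗ z ⟶ y ⊗ z) : x ⊗ y ⊗ z ⟶ x ⊗ y ⊗ z :=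
  x ◁ h

omit [SymmetricCategory C] [Preadditive C] in
theorem whiskerLeft_comp_of_natural (r : ∀ x y : C, x ⊗ y ⟶ x ⊗ y)
    (hnat : ∀ {x x' y y' : C} (f : x ⟶ x') (g : y ⟶ y'),
      (f ⊗ₘ g) ≫ r x' y' = r x y ≫ (f ⊗ₘ g))
    (x : C) {w w' : C} (h : w ⟶ w') :
    (x ◁ h) ≫ r x w' = r x w ≫ (x ◁ h) := by
  simpa only [id_tensorHom] using hnat (𝟙 x) h

theorem four_term_relation_general
    (r : ∀ x y : C, x ⊗ y ⟶ x ⊗ y)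
    (hnat : ∀ {x x' y y' : C} (f : x ⟶ x') (g : y ⟶ y'),
      (f ⊗ₘ g) ≫ r x' y' = r x y ≫ (f ⊗ₘ g))
    (hlin : ∀ x y z : C,
      r x (y ⊗ z) = conj12 (r x y) + conj13 y (r x z))
    (x y z : C) :
    (conj12 (r x y) + conj13 y (r x z)) ≫ conj23 x (r y z)
      = conj23 x (r y z) ≫ (conj12 (r x y) + conj13 y (r x z)) := by
  rw [← hlin]
  exact (whiskerLeft_comp_of_natural r hnat x (r y z)).symm

/-- An infinitesimal braiding `r` in a linear symmetric monoidal category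
(a natural family `r_{x,y} : x ⊗ y ⟶ x ⊗ y` with `B_{x,y} ∘ r_{y,x} = r_{x,y} ∘ B_{x,y}`
and `r_{x,y⊗z} = r¹²_{x,y} + r¹³_{x,z}`) satisfies the 4-term relation
`[r¹²_{x,y} + r¹³_{x,z}, r²³_{y,z}] = 0` on `x ⊗ y ⊗ z`. -/
theorem four_term_relation
    (r : ∀ x y : C, x ⊗ y ⟶ x ⊗ y)
    (hnat : ∀ {x x' y y' : C} (f : x ⟶ x') (g : y ⟶ y'),
      (f ⊗ₘ g) ≫ r x' y' = r x y ≫ (f ⊗ₘ g))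
    (hsymm : ∀ x y : C, (β_ x y).hom ≫ r y x = r x y ≫ (β_ x y).hom)
    (hlin : ∀ x y z : C,
      r x (y ⊗ z) = conj12 (r x y) + conj13 y (r x z))
    (x y z : C) :
    (conj12 (r x y) + conj13 y (r x z)) ≫ conj23 x (r y z)
      = conj23 x (r y z) ≫ (conj12 (r x y) + conj13 y (r x z)) :=
  four_term_relation_general r hnat hlin x y z

end Stmt0
end

section
/- Let g be a Lie algebra over a field k and r = Σ_q s_q ⊗ t_q ∈ g ⊗ g a g-invariant tensor, meaning Σ_q ([X, s_q] ⊗ t_q + s_q ⊗ [X, t_q]) = 0 for all X ∈ g. Then in the universal enveloping algebra U(g)^{⊗3}, the 4-term relation [r^{12} + r^{13}, r^{23}] = 0 holds, where r^{12} = Σ s_q ⊗ t_q ⊗ 1, r^{13} = Σ s_q ⊗ 1 ⊗ t_q, r^{23} = Σ 1 ⊗ s_q ⊗ t_q. -/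
/-! With `Δ X = X ⊗ 1 + 1 ⊗ X`, one has `r¹² + r¹³ = Σ s_i ⊗ Δ (t_i)` and `r²³ = 1 ⊗ r`, so the
commutator is `Σ s_i ⊗ [Δ (t_i), r]`. For any Lie algebra map `g → A` into an associative algebra,
`[Δ X, r]` in `A ⊗ A` is the image of the action `⁅X, r⁆` of `X` on `g ⊗ g`, which vanishes by
invariance. -/

open scoped TensorProduct
open UniversalEnvelopingAlgebra

namespace Stmt1

section

open TensorProduct

attribute [local instance] LieRing.ofAssociativeRing

theorem tmul_mul_one_tmul_sub {k A B : Type*} [CommRing k] [Ring A] [Algebra k A] [Ring B]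
    [Algebra k B] (a : A) (b c : B) :
    a ⊗ₜ[k] b * (1 ⊗ₜ c) - 1 ⊗ₜ c * (a ⊗ₜ b) = a ⊗ₜ (b * c - c * b) := by
  simp only [Algebra.TensorProduct.tmul_mul_tmul, mul_one, one_mul, tmul_sub]

variable {k : Type*} [CommRing k] {g : Type*} [LieRing g] [LieAlgebra k g]
  {A : Type*} [Ring A] [Algebra k A] (f : g →ₗ⁅k⁆ A)

theorem map_lie_eq_commutator (X : g) (r : g ⊗[k] g) :
    map (f : g →ₗ[k] A) f ⁅X, r⁆ =
      (f X ⊗ₜ 1 + 1 ⊗ₜ f X) * map (f : g →ₗ[k] A) f r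
        - map (f : g →ₗ[k] A) f r * (f X ⊗ₜ 1 + 1 ⊗ₜ f X) := by
  induction r using TensorProduct.induction_on with
  | zero => simp
  | tmul x y =>
    simp only [LieModule.lie_tmul_right, map_add, map_tmul, LieHom.coe_toLinearMap,
      LieHom.map_lie, Ring.lie_def, add_mul, mul_add, Algebra.TensorProduct.tmul_mul_tmul,
      mul_one, one_mul, sub_tmul, tmul_sub]
    abel
  | add x y hx hy => simp only [lie_add, map_add, hx, hy, mul_add, add_mul]; abel

theorem four_term_of_lieHom {q : Type*} [Fintype q] (s t : q → g)
    (hinv : ∀ X : g, ⁅X, ∑ i, s i ⊗ₜ[k] t i⁆ = 0) :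
    let r12 : A ⊗[k] (A ⊗[k] A) := ∑ i, f (s i) ⊗ₜ (f (t i) ⊗ₜ 1)
    let r13 : A ⊗[k] (A ⊗[k] A) := ∑ i, f (s i) ⊗ₜ (1 ⊗ₜ f (t i))
    let r23 : A ⊗[k] (A ⊗[k] A) := ∑ i, 1 ⊗ₜ (f (s i) ⊗ₜ f (t i))
    (r12 + r13) * r23 - r23 * (r12 + r13) = 0 := by
  intro r12 r13 r23
  have hr23 : r23 = 1 ⊗ₜ map (f : g →ₗ[k] A) f (∑ i, s i ⊗ₜ t i) := by
    simp only [r23, map_sum, map_tmul, LieHom.coe_toLinearMap, tmul_sum]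
  have hr12_add_r13 : r12 + r13 = ∑ i, f (s i) ⊗ₜ (f (t i) ⊗ₜ 1 + 1 ⊗ₜ f (t i)) := by
    simp only [r12, r13, ← Finset.sum_add_distrib, tmul_add]
  rw [hr12_add_r13, hr23, Finset.sum_mul, Finset.mul_sum, ← Finset.sum_sub_distrib]
  refine Finset.sum_eq_zero fun i _ => ?_
  rw [tmul_mul_one_tmul_sub, ← map_lie_eq_commutator, hinv, map_zero, tmul_zero]

end

/-- For a `g`-invariant tensor `r = Σ_q s_q ⊗ t_q ∈ g ⊗ g`, the 4-term
relation `[r¹² + r¹³, r²³] = 0` holds in `U(g)^{⊗3}`, where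
`r¹² = Σ s_q ⊗ t_q ⊗ 1`, `r¹³ = Σ s_q ⊗ 1 ⊗ t_q`, `r²³ = Σ 1 ⊗ s_q ⊗ t_q`. -/
theorem four_term_of_invariant {k : Type*} [Field k] {g : Type*} [LieRing g]
    [LieAlgebra k g] {q : Type*} [Fintype q] (s t : q → g)
    (hinv : ∀ X : g,
      (∑ i : q, (⁅X, s i⁆ ⊗ₜ[k] t i + s i ⊗ₜ[k] ⁅X, t i⁆)) = (0 : g ⊗[k] g)) :
    letI U := UniversalEnvelopingAlgebra k g
    letI r12 : U ⊗[k] (U ⊗[k] U) :=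
      ∑ i : q, (ι k (s i)) ⊗ₜ[k] ((ι k (t i)) ⊗ₜ[k] (1 : U))
    letI r13 : U ⊗[k] (U ⊗[k] U) :=
      ∑ i : q, (ι k (s i)) ⊗ₜ[k] ((1 : U) ⊗ₜ[k] (ι k (t i)))
    letI r23 : U ⊗[k] (U ⊗[k] U) :=
      ∑ i : q, (1 : U) ⊗ₜ[k] ((ι k (s i)) ⊗ₜ[k] (ι k (t i)))
    (r12 + r13) * r23 - r23 * (r12 + r13) = 0 :=
  four_term_of_lieHom (ι k) s t fun X => by
    simpa only [lie_sum, TensorProduct.LieModule.lie_tmul_right] using hinv X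

end Stmt1
end

section
/- Let ω_{ij} = (dz_i − dz_j)/(z_i − z_j) be the 1-forms on the configuration space C(n) = {(z_1,…,z_n) ∈ ℂⁿ : z_i ≠ z_j for i ≠ j}. Then for distinct indices i, j, k the Arnold relation holds: ω_{ij} ∧ ω_{jk} + ω_{jk} ∧ ω_{ki} + ω_{ki} ∧ ω_{ij} = 0. -/
namespace Stmt3

/-- The value of the 1-form `ω_{ij} = (dz_i − dz_j)/(z_i − z_j)` at the point
`z` of the configuration space `C(n)`, evaluated on a tangent vector `u`. -/
noncomputable def omega {n : ℕ} (z : Fin n → ℂ) (i j : Fin n) (u : Fin n → ℂ) : ℂ :=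
  (u i - u j) / (z i - z j)

/-- The Arnold relation: for a point `z` of the configuration space
`C(n) = {z ∈ ℂⁿ : z_i ≠ z_j for i ≠ j}` and distinct indices `i, j, k`, the
2-form `ω_{ij} ∧ ω_{jk} + ω_{jk} ∧ ω_{ki} + ω_{ki} ∧ ω_{ij}` vanishes
(evaluated on any pair of tangent vectors `u, v`, where the wedge of 1-forms
is `(ω ∧ η)(u,v) = ω(u)η(v) − ω(v)η(u)`). -/
theorem arnold_relation {n : ℕ} (z : Fin n → ℂ)
    (hz : ∀ a b : Fin n, a ≠ b → z a ≠ z b)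
    (i j k : Fin n) (hij : i ≠ j) (hjk : j ≠ k) (hik : i ≠ k)
    (u v : Fin n → ℂ) :
    (omega z i j u * omega z j k v - omega z i j v * omega z j k u)
      + (omega z j k u * omega z k i v - omega z j k v * omega z k i u)
      + (omega z k i u * omega z i j v - omega z k i v * omega z i j u) = 0 := by
  have h1 : z i - z j ≠ 0 := sub_ne_zero.mpr (hz i j hij)
  have h2 : z j - z k ≠ 0 := sub_ne_zero.mpr (hz j k hjk)
  have h3 : z k - z i ≠ 0 := sub_ne_zero.mpr (hz k i (Ne.symm hik))
  simp only [omega]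
  field_simp
  ring

end Stmt3
end

section
/- Let C be a linear 2-category and x an object. Define gl⁰(x) = C₁(x,x) with bracket {f,g} = fg − gf, and gl¹(x) = {T ∈ C₂(x,x) : s'(T) = 0_x} with bracket {T,S} = TS − ST (horizontal composition). Then the target map β = t' : gl¹(x) → gl⁰(x), together with the action f ▷ T = fT − Tf, forms a differential crossed module: β is a Lie algebra morphism, ▷ is an action by derivations, β(f ▷ T) = [f, β(T)], and β(T) ▷ S = {T, S}. -/
namespace Stmt8

/-- Let `C` be a linear 2-category and `x` an object.  Below, `C₁ = C₁(x,x)`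
and `C₂ = C₂(x,x)` are the 2-vector spaces of 1- and 2-endomorphisms of `x`,
with linear source/target/identity maps `s', t', i'`, vertical composition
`comp`, bilinear 1-composition `mul` (with unit `one = id_x`) and bilinear
left/right whiskerings `lw, rw`, satisfying the axioms of a linear 2-category.
Set `gl⁰(x) = C₁` with `{f,g} = fg − gf`, and `gl¹(x) = {T : s' T = 0}` with
`{T,S} = TS − ST` (horizontal composition `TS = (T · s'S) ∘ᵥ (t'T · S)`).
Then `β = t'` and the action `f ▷ T = fT − Tf` form a differential crossed
module: `β` is a Lie algebra morphism, `▷` is an action by derivations,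
`β(f ▷ T) = [f, β T]`, and `β(T) ▷ S = {T,S}`. -/
theorem gl_differential_crossed_module {k : Type*} [Field k]
    {C₁ C₂ : Type*} [AddCommGroup C₁] [Module k C₁] [AddCommGroup C₂] [Module k C₂]
    (s' t' : C₂ →ₗ[k] C₁) (i' : C₁ →ₗ[k] C₂)
    (hsi : ∀ f : C₁, s' (i' f) = f) (hti : ∀ f : C₁, t' (i' f) = f)
    -- bilinear, associative, unital 1-composition:
    (mul : C₁ →ₗ[k] C₁ →ₗ[k] C₁) (one : C₁)
    (hmul_assoc : ∀ f g h : C₁, mul (mul f g) h = mul f (mul g h))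
    (hone_l : ∀ f : C₁, mul one f = f) (hone_r : ∀ f : C₁, mul f one = f)
    -- vertical composition:
    (comp : C₂ → C₂ → C₂)
    (hcomp_s : ∀ A B : C₂, t' A = s' B → s' (comp A B) = s' A)
    (hcomp_t : ∀ A B : C₂, t' A = s' B → t' (comp A B) = t' B)
    (hcomp_add : ∀ A A' B B' : C₂, t' A = s' B → t' A' = s' B' →
      comp (A + A') (B + B') = comp A B + comp A' B')
    (hcomp_smul : ∀ (c : k) (A B : C₂), t' A = s' B →
      comp (c • A) (c • B) = c • comp A B)
    (hid_l : ∀ (f : C₁) (B : C₂), s' B = f → comp (i' f) B = B)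
    (hid_r : ∀ (A : C₂) (g : C₁), t' A = g → comp A (i' g) = A)
    -- bilinear whiskerings:
    (lw : C₁ →ₗ[k] C₂ →ₗ[k] C₂) (rw : C₂ →ₗ[k] C₁ →ₗ[k] C₂)
    (hlw_s : ∀ (f : C₁) (T : C₂), s' (lw f T) = mul f (s' T))
    (hlw_t : ∀ (f : C₁) (T : C₂), t' (lw f T) = mul f (t' T))
    (hrw_s : ∀ (T : C₂) (f : C₁), s' (rw T f) = mul (s' T) f)
    (hrw_t : ∀ (T : C₂) (f : C₁), t' (rw T f) = mul (t' T) f)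
    -- associativity of whiskering with 1-composition:
    (hlw_assoc : ∀ (f g : C₁) (T : C₂), lw f (lw g T) = lw (mul f g) T)
    (hrw_assoc : ∀ (T : C₂) (f g : C₁), rw (rw T f) g = rw T (mul f g))
    (hlrw_assoc : ∀ (f : C₁) (T : C₂) (g : C₁), lw f (rw T g) = rw (lw f T) g)
    -- whiskering of identity 2-morphisms:
    (hlw_id : ∀ f g : C₁, lw f (i' g) = i' (mul f g))
    (hrw_id : ∀ g f : C₁, rw (i' g) f = i' (mul g f))
    -- distributivity of whiskering over vertical composition:
    (hlw_comp : ∀ (f : C₁) (A B : C₂), t' A = s' B →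
      lw f (comp A B) = comp (lw f A) (lw f B))
    (hrw_comp : ∀ (A B : C₂) (f : C₁), t' A = s' B →
      rw (comp A B) f = comp (rw A f) (rw B f))
    -- the interchange law:
    (hinter : ∀ T S : C₂,
      comp (rw T (s' S)) (lw (t' T) S) = comp (lw (s' T) S) (rw T (t' S))) :
    -- horizontal composition of 2-morphisms:
    letI hmul : C₂ → C₂ → C₂ := fun T S => comp (rw T (s' S)) (lw (t' T) S)
    -- the bracket on `gl¹(x)` and the action of `gl⁰(x)`:
    letI lie2 : C₂ → C₂ → C₂ := fun T S => hmul T S - hmul S T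
    letI act : C₁ → C₂ → C₂ := fun f T => lw f T - rw T f
    -- `β = t'` is a Lie algebra morphism `gl¹(x) → gl⁰(x)`:
    (∀ T S : C₂, s' T = 0 → s' S = 0 →
      t' (lie2 T S) = mul (t' T) (t' S) - mul (t' S) (t' T)) ∧
    -- `▷` is a Lie algebra action:
    (∀ (f g : C₁) (T : C₂), s' T = 0 →
      act (mul f g - mul g f) T = act f (act g T) - act g (act f T)) ∧
    -- `▷` acts by derivations:
    (∀ (f : C₁) (T S : C₂), s' T = 0 → s' S = 0 →
      act f (lie2 T S) = lie2 (act f T) S + lie2 T (act f S)) ∧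
    -- `β(f ▷ T) = [f, β T]`:
    (∀ (f : C₁) (T : C₂), s' T = 0 →
      t' (act f T) = mul f (t' T) - mul (t' T) f) ∧
    -- `β(T) ▷ S = {T, S}`:
    (∀ T S : C₂, s' T = 0 → s' S = 0 → act (t' T) S = lie2 T S) := by
  have key1 : ∀ T S : C₂, s' T = 0 → s' S = 0 →
      comp (rw T (s' S)) (lw (t' T) S) = lw (t' T) S := by
    intro T S hT hS
    have h1 : rw T (s' S) = i' 0 := by rw [hS]; simp
    rw [h1, hid_l]
    rw [hlw_s, hS]; simp
  have key2 : ∀ T S : C₂, s' T = 0 → s' S = 0 →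
      comp (rw T (s' S)) (lw (t' T) S) = rw T (t' S) := by
    intro T S hT hS
    rw [hinter]
    have h1 : lw (s' T) S = i' 0 := by rw [hT]; simp
    rw [h1, hid_l]
    rw [hrw_s, hT]; simp
  have hs_act : ∀ (f : C₁) (T : C₂), s' T = 0 → s' (lw f T - rw T f) = 0 := by
    intro f T hT
    rw [map_sub, hlw_s, hrw_s, hT]; simp
  have ht_act : ∀ (f : C₁) (T : C₂), t' (lw f T - rw T f) = mul f (t' T) - mul (t' T) f := by
    intro f T
    rw [map_sub, hlw_t, hrw_t]
  refine ⟨?_, ?_, ?_, ?_, ?_⟩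
  · intro T S hT hS
    show t' (comp (rw T (s' S)) (lw (t' T) S) - comp (rw S (s' T)) (lw (t' S) T)) = _
    rw [key1 T S hT hS, key1 S T hS hT, map_sub, hlw_t, hlw_t]
  · intro f g T hT
    show lw (mul f g - mul g f) T - rw T (mul f g - mul g f)
        = (lw f (lw g T - rw T g) - rw (lw g T - rw T g) f)
          - (lw g (lw f T - rw T f) - rw (lw f T - rw T f) g)
    simp only [map_sub, LinearMap.sub_apply, hlw_assoc, hrw_assoc, ← hlrw_assoc]
    abel
  · intro f T S hT hS
    have hT' := hs_act f T hT
    have hS' := hs_act f S hS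
    show lw f (comp (rw T (s' S)) (lw (t' T) S) - comp (rw S (s' T)) (lw (t' S) T))
        - rw (comp (rw T (s' S)) (lw (t' T) S) - comp (rw S (s' T)) (lw (t' S) T)) f
        = (comp (rw (lw f T - rw T f) (s' S)) (lw (t' (lw f T - rw T f)) S)
            - comp (rw S (s' (lw f T - rw T f))) (lw (t' S) (lw f T - rw T f)))
          + (comp (rw T (s' (lw f S - rw S f))) (lw (t' T) (lw f S - rw S f))
            - comp (rw (lw f S - rw S f) (s' T)) (lw (t' (lw f S - rw S f)) T))
    rw [key1 T S hT hS, key1 S T hS hT, key1 _ S hT' hS, key1 S _ hS hT',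
        key1 T _ hT hS', key1 _ T hS' hT, ht_act, ht_act]
    simp only [map_sub, LinearMap.sub_apply, hlw_assoc, hrw_assoc, ← hlrw_assoc]
    abel
  · intro f T hT
    exact ht_act f T
  · intro T S hT hS
    show lw (t' T) S - rw S (t' T)
        = comp (rw T (s' S)) (lw (t' T) S) - comp (rw S (s' T)) (lw (t' S) T)
    rw [key1 T S hT hS, key2 S T hS hT]

end Stmt8
end

section
/- Let g be a Lie algebra acting on a vector space V by a Lie algebra representation, and let ω : Λ²g → V be an alternating bilinear map. Define δω : Λ³g → V by δω(X,Y,Z) = X·ω(Y,Z) + Y·ω(Z,X) + Z·ω(X,Y) + ω(X,[Y,Z]) + ω(Y,[Z,X]) + ω(Z,[X,Y]). Then for the Lie algebra W₁ of polynomial vector fields f(x) d/dx acting on the space F₁ of polynomial 1-forms by Lie derivative, the map ᾱ(f d/dx, g d/dx) = (1/2)(f'g'' − f''g') dx is a 2-cocycle: δᾱ = 0. -/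
open Polynomial

namespace Stmt9

/-- The bracket of the Lie algebra `W₁` of polynomial vector fields,
identifying `f(x) d/dx` with the polynomial `f`:
`[f d/dx, g d/dx] = (f g' - f' g) d/dx`. -/
noncomputable def W1bracket (f g : Polynomial ℂ) : Polynomial ℂ :=
  f * derivative g - derivative f * g

/-- The action of `W₁` on the space `F₁` of polynomial 1-forms (identifying
`g(x) dx` with `g`) by Lie derivative: `(f d/dx) ▷ (g dx) = (f g' + f' g) dx`. -/
noncomputable def actF1 (f g : Polynomial ℂ) : Polynomial ℂ :=
  f * derivative g + derivative f * g

/-- The 2-cochain `ᾱ(f d/dx, g d/dx) = (1/2)(f' g'' − f'' g') dx` on `W₁`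
with values in `F₁`. -/
noncomputable def alphaBar (f g : Polynomial ℂ) : Polynomial ℂ :=
  ((1 : ℂ)/2) • (derivative f * derivative (derivative g)
    - derivative (derivative f) * derivative g)

/-- `ᾱ` is a Lie algebra 2-cocycle on `W₁` with values in `F₁`: its
Chevalley–Eilenberg coboundary
`δᾱ(X,Y,Z) = X·ᾱ(Y,Z) + Y·ᾱ(Z,X) + Z·ᾱ(X,Y) + ᾱ(X,[Y,Z]) + ᾱ(Y,[Z,X]) + ᾱ(Z,[X,Y])`
vanishes. -/
theorem alphaBar_is_two_cocycle (f g h : Polynomial ℂ) :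
    actF1 f (alphaBar g h) + actF1 g (alphaBar h f) + actF1 h (alphaBar f g)
      + alphaBar f (W1bracket g h) + alphaBar g (W1bracket h f)
      + alphaBar h (W1bracket f g) = 0 := by
  simp only [actF1, alphaBar, W1bracket, smul_sub, smul_add, derivative_sub,
    derivative_add, derivative_mul, derivative_smul, smul_eq_mul, Polynomial.smul_eq_C_mul, derivative_C]
  ring

end Stmt9
end
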